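/- arXiv:1904.00729 — 5 statements merged into one kernel-verified Lean document; each statement's English description precedes it below -/
import Mathlib

section
/- Let G(Γ) be the plumbing group of a plumbing graph Γ and suppose the set of arrowheads H is nonempty. Fix an arrowhead h₀ ∈ H. Then the relation (R2) for h₀, namely [γ_{h₀}, γ_{v_{h₀}}] = 1, is a consequence of the remaining relations: the canonical surjection from the group presented by the same generators and by all relations (R1), (R3), (R4) together with the relations (R2) for all h ≠ h₀, onto G(Γ), is an isomorphism. -/
open scoped BigOperators
open scoped commutatorElement

/-- A plumbing graph: a finite connected loopless multigraph with vertex set `V`,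
arrowheads `H` (each attached to a single vertex), edges `E` between vertices
(oriented so that `src e < tgt e` in the fixed linear order on `V`), Euler numbers,
genera, and a fixed maximal (spanning) tree, together with fixed linear orders on
`V`, `H` and `E` used to order the products in the relations. -/
structure PlumbingGraph where
  V : Type
  H : Type
  E : Type
  [fintypeV : Fintype V]
  [fintypeH : Fintype H]
  [fintypeE : Fintype E]
  [linOrdV : LinearOrder V]
  [linOrdH : LinearOrder H]
  [linOrdE : LinearOrder E]
  nonemptyV : Nonempty V
  src : E → V
  tgt : E → V
  /-- no loops; each edge is oriented from its smaller endpoint to its larger one -/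
  src_lt_tgt : ∀ e, src e < tgt e
  /-- the vertex attached to an arrowhead -/
  vh : H → V
  /-- Euler numbers -/
  euler : V → ℤ
  /-- genera -/
  genus : V → ℕ
  /-- the fixed maximal tree -/
  tree : Finset E
  /-- the tree is spanning: any two vertices are joined by a path of tree edges -/
  tree_spanning : ∀ v w : V, Relation.ReflTransGen
    (fun x y => ∃ e ∈ tree, (src e = x ∧ tgt e = y) ∨ (src e = y ∧ tgt e = x)) v w
  /-- the tree has `|V| - 1` edges (hence is a tree) -/
  tree_card : tree.card + 1 = Fintype.card V
  /-- tree edges are minimal in each `E_{v,w}` -/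
  tree_min : ∀ e ∈ tree, ∀ e' : E, src e = src e' → tgt e = tgt e' → e ≤ e'

attribute [instance] PlumbingGraph.fintypeV PlumbingGraph.fintypeH PlumbingGraph.fintypeE
  PlumbingGraph.linOrdV PlumbingGraph.linOrdH PlumbingGraph.linOrdE

/-- Generators of the plumbing group: `γ_v` (`vert`), `γ_h` (`arrow`),
`γ_e` for `e ∈ E*` (`edge`), and `α_{j,v}`, `β_{j,v}` (`hA`, `hB`). -/
inductive PlumbingGraph.Gen (Γ : PlumbingGraph) : Type
  | vert : Γ.V → Γ.Gen
  | arrow : Γ.H → Γ.Gen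
  | edge : (e : Γ.E) → e ∉ Γ.tree → Γ.Gen
  | hA : (v : Γ.V) → Fin (Γ.genus v) → Γ.Gen
  | hB : (v : Γ.V) → Fin (Γ.genus v) → Γ.Gen

namespace PlumbingGraph

variable (Γ : PlumbingGraph)

/-- `γ_ê`: trivial on tree edges, `γ_e` when read from the smaller endpoint `v`,
`γ_e⁻¹` when read from the larger endpoint. -/
def gammaHat (v : Γ.V) (e : Γ.E) : FreeGroup Γ.Gen :=
  if h : e ∈ Γ.tree then 1
  else if Γ.src e = v then FreeGroup.of (Gen.edge e h)
  else (FreeGroup.of (Gen.edge e h))⁻¹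

/-- the endpoint of `e` other than `v` (for `e` incident to `v`) -/
def otherEnd (v : Γ.V) (e : Γ.E) : Γ.V :=
  if Γ.src e = v then Γ.tgt e else Γ.src e

/-- `E_v`: the set of edges at `v` -/
def edgesAt (v : Γ.V) : Finset Γ.E :=
  Finset.univ.filter fun e => Γ.src e = v ∨ Γ.tgt e = v

/-- `H_v`: the set of arrowheads at `v` -/
def arrowsAt (v : Γ.V) : Finset Γ.H :=
  Finset.univ.filter fun h => Γ.vh h = v

/-- the ordered product `Π_{e ∈ E_v} γ_ê γ_{v₂(e)} γ_ê⁻¹` -/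
def edgeProd (v : Γ.V) : FreeGroup Γ.Gen :=
  (((Γ.edgesAt v).sort (· ≤ ·)).map fun e =>
    Γ.gammaHat v e * FreeGroup.of (Gen.vert (Γ.otherEnd v e)) * (Γ.gammaHat v e)⁻¹).prod

/-- the ordered product `Π_{h ∈ H_v} γ_h` -/
def arrowProd (v : Γ.V) : FreeGroup Γ.Gen :=
  (((Γ.arrowsAt v).sort (· ≤ ·)).map fun h => FreeGroup.of (Gen.arrow h)).prod

/-- the product of commutators `Π_j [α_{j,v}, β_{j,v}]` -/
def genusProd (v : Γ.V) : FreeGroup Γ.Gen :=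
  ((List.finRange (Γ.genus v)).map fun j =>
    ⁅FreeGroup.of (Gen.hA v j), FreeGroup.of (Gen.hB v j)⁆).prod

/-- the relator (R1) at a vertex `v` -/
def relR1 (v : Γ.V) : FreeGroup Γ.Gen :=
  Γ.edgeProd v * Γ.arrowProd v * (FreeGroup.of (Gen.vert v)) ^ (Γ.euler v) *
    (Γ.genusProd v)⁻¹

/-- the relator (R2) at an arrowhead `h` -/
def relR2 (h : Γ.H) : FreeGroup Γ.Gen :=
  ⁅FreeGroup.of (Gen.arrow h), FreeGroup.of (Gen.vert (Γ.vh h))⁆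

/-- the relator (R3) at an edge `e ∈ E*` -/
def relR3 (e : Γ.E) (he : e ∉ Γ.tree) : FreeGroup Γ.Gen :=
  ⁅FreeGroup.of (Gen.vert (Γ.src e)),
    FreeGroup.of (Gen.edge e he) * FreeGroup.of (Gen.vert (Γ.tgt e)) *
      (FreeGroup.of (Gen.edge e he))⁻¹⁆

/-- the set of relators (R1)–(R4) -/
def rels : Set (FreeGroup Γ.Gen) :=
  (Set.range fun v => Γ.relR1 v) ∪ (Set.range fun h => Γ.relR2 h) ∪
    {w | ∃ (e : Γ.E) (he : e ∉ Γ.tree), w = Γ.relR3 e he} ∪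
    {w | ∃ (v : Γ.V) (j : Fin (Γ.genus v)),
      w = ⁅FreeGroup.of (Gen.vert v), FreeGroup.of (Gen.hA v j)⁆ ∨
      w = ⁅FreeGroup.of (Gen.vert v), FreeGroup.of (Gen.hB v j)⁆}

/-- the plumbing group `G(Γ)` -/
abbrev Grp : Type := PresentedGroup Γ.rels

/-- the incidence matrix `A` -/
def incidence : Matrix Γ.V Γ.V ℤ := Matrix.of fun v w =>
  if v = w then Γ.euler v
  else ((Finset.univ.filter fun e : Γ.E =>
    (Γ.src e = v ∧ Γ.tgt e = w) ∨ (Γ.src e = w ∧ Γ.tgt e = v)).card : ℤ)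

/-- `A` is negative definite -/
def NegDefinite : Prop :=
  ∀ x : Γ.V → ℝ, x ≠ 0 → ∑ v : Γ.V, ∑ w : Γ.V, x v * (Γ.incidence v w : ℝ) * x w < 0

/-- `r`: the number of arrowheads -/
def r : ℕ := Fintype.card Γ.H

/-- `b₁(Γ)`: the number of edges outside the maximal tree -/
def b1 : ℕ := (Finset.univ.filter fun e : Γ.E => e ∉ Γ.tree).card

end PlumbingGraph

/-- the one-dimensional representation `ℂ_ξ` attached to a character `ξ : G → ℂ*` -/
noncomputable def charRep {G : Type} [Group G] (ξ : G →* ℂˣ) : Rep ℂ G :=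
  Rep.of
    { toFun := fun g => (ξ g : ℂ) • (LinearMap.id : ℂ →ₗ[ℂ] ℂ)
      map_one' := by simp [Module.End.one_eq_id]
      map_mul' := fun g h => by
        ext
        simp [mul_smul, Module.End.mul_apply, mul_comm] }

/-- `dim_ℂ H¹(G; ℂ_ξ)` -/
noncomputable def h1dim {G : Type} [Group G] (ξ : G →* ℂˣ) : ℕ :=
  Module.finrank ℂ (groupCohomology (charRep ξ) 1)

namespace PlumbingGraph

/-- the relators (R1), (R3), (R4) together with (R2) for all `h ≠ h₀` -/
def relsMinus (Γ : PlumbingGraph) (h₀ : Γ.H) : Set (FreeGroup Γ.Gen) :=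
  (Set.range fun v => Γ.relR1 v) ∪ {w | ∃ h : Γ.H, h ≠ h₀ ∧ w = Γ.relR2 h} ∪
    {w | ∃ (e : Γ.E) (he : e ∉ Γ.tree), w = Γ.relR3 e he} ∪
    {w | ∃ (v : Γ.V) (j : Fin (Γ.genus v)),
      w = ⁅FreeGroup.of (Gen.vert v), FreeGroup.of (Gen.hA v j)⁆ ∨
      w = ⁅FreeGroup.of (Gen.vert v), FreeGroup.of (Gen.hB v j)⁆}

end PlumbingGraph

/-!
Root the maximal tree at `v_{h₀}` and work in the group without (R2) for `h₀`. By induction from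
the leaves, `γ_u` commutes with `γ_w` whenever `w` is the parent of `u`: at `u ≠ v_{h₀}`, every
factor of the relation (R1) at `u` other than `γ_w` commutes with `γ_u` (arrowheads by (R2),
non-tree edges by (R3), genus commutators by (R4), children by induction), hence so does `γ_w`.
At the root all edge factors of (R1) then commute with `γ_{v_{h₀}}`, so the arrowhead product does,
and since all its other factors do by (R2), so does `γ_{h₀}`.
-/

theorem Subgroup.apply_mem_of_list_prod_map_mem {G ι : Type*} [Group G] {S : Subgroup G}
    {f : ι → G} {l : List ι} (hl : l.Nodup) {a : ι} (ha : a ∈ l)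
    (hprod : (l.map f).prod ∈ S) (hrest : ∀ b ∈ l, b ≠ a → f b ∈ S) : f a ∈ S := by
  obtain ⟨l₁, l₂, rfl⟩ := List.append_of_mem ha
  obtain ⟨-, hl₂, hdisj⟩ := List.nodup_append'.mp hl
  have hmem : ∀ l' : List ι, (∀ b ∈ l', b ∈ l₁ ++ a :: l₂ ∧ b ≠ a) → (l'.map f).prod ∈ S :=
    fun l' h => S.list_prod_mem <| List.forall_mem_map.mpr fun b hb =>
      hrest b (h b hb).1 (h b hb).2
  have h₁ := hmem l₁ fun b hb => ⟨List.mem_append_left _ hb,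
    by rintro rfl; exact hdisj hb List.mem_cons_self⟩
  have h₂ := hmem l₂ fun b hb => ⟨List.mem_append_right _ (List.mem_cons_of_mem _ hb),
    by rintro rfl; exact (List.nodup_cons.mp hl₂).1 hb⟩
  rw [List.map_append, List.map_cons, List.prod_append, List.prod_cons] at hprod
  simpa using S.mul_mem (S.mul_mem (S.inv_mem h₁) hprod) (S.inv_mem h₂)

theorem Subgroup.apply_mem_of_sort_prod_mem {G ι : Type*} [Group G] [LinearOrder ι]
    {S : Subgroup G} {f : ι → G} {s : Finset ι} {a : ι} (ha : a ∈ s)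
    (hprod : ((s.sort (· ≤ ·)).map f).prod ∈ S) (hrest : ∀ b ∈ s, b ≠ a → f b ∈ S) :
    f a ∈ S :=
  Subgroup.apply_mem_of_list_prod_map_mem (s.sort_nodup _) ((s.mem_sort _).mpr ha) hprod
    fun b hb => hrest b ((s.mem_sort _).mp hb)

theorem Subgroup.sort_prod_mem {G ι : Type*} [Group G] [LinearOrder ι]
    {S : Subgroup G} {f : ι → G} {s : Finset ι} (h : ∀ b ∈ s, f b ∈ S) :
    ((s.sort (· ≤ ·)).map f).prod ∈ S :=
  S.list_prod_mem <| List.forall_mem_map.mpr fun b hb => h b ((s.mem_sort _).mp hb)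

theorem SimpleGraph.IsTree.dist_lt_of_adj_of_ne {V : Type*} {G : SimpleGraph V} (hG : G.IsTree)
    (r : V) {u w x : V} (hw : G.Adj u w) (hdw : G.dist r w < G.dist r u) (hx : G.Adj u x)
    (hxw : x ≠ w) : G.dist r u < G.dist r x := by
  classical
  obtain ⟨p, hp, -⟩ := (hG.connected r u).exists_path_of_dist
  have penultimate : ∀ y, G.Adj u y → G.dist r y < G.dist r u → y = p.penultimate := by
    intro y hy hdy
    obtain ⟨q, hq, hql⟩ := (hG.connected r y).exists_path_of_dist
    have hu : u ∉ q.support := fun hu =>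
      ((G.dist_le (q.takeUntil u hu)).trans (q.length_takeUntil_le_length hu)).not_gt (hql ▸ hdy)
    exact hG.isAcyclic.eq_penultimate_of_adj_end hp hy
      (hG.isAcyclic.mem_support_of_ne_mem_support_of_adj_of_isPath hp hq hy hu)
  rcases hG.dist_eq_dist_add_one_of_adj r hx with h | h
  · exact absurd ((penultimate x hx (by omega)).trans (penultimate w hw hdw).symm) hxw
  · omega

theorem PresentedGroup.exists_mulEquiv_of_subset {α : Type*} {rels₁ rels₂ : Set (FreeGroup α)}
    (hsub : rels₁ ⊆ rels₂) (hrels : ∀ r ∈ rels₂, PresentedGroup.mk rels₁ r = 1) :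
    ∃ φ : PresentedGroup rels₁ ≃* PresentedGroup rels₂, ∀ x, φ (.of x) = .of x := by
  have hcl : Subgroup.normalClosure rels₁ = Subgroup.normalClosure rels₂ :=
    le_antisymm (Subgroup.normalClosure_mono hsub) <| Subgroup.normalClosure_le_normal
      fun r hr => (QuotientGroup.eq_one_iff r).mp (hrels r hr)
  exact ⟨QuotientGroup.quotientMulEquivOfEq hcl, fun x =>
    QuotientGroup.quotientMulEquivOfEq_mk hcl (FreeGroup.of x)⟩

namespace PlumbingGraph

section

variable (Γ : PlumbingGraph)

def ends (e : Γ.E) : Sym2 Γ.V := s(Γ.src e, Γ.tgt e)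

def treeGraph : SimpleGraph Γ.V := SimpleGraph.fromEdgeSet (Γ.ends '' Γ.tree)

def edgeFactor (v : Γ.V) (e : Γ.E) : FreeGroup Γ.Gen :=
  Γ.gammaHat v e * FreeGroup.of (Gen.vert (Γ.otherEnd v e)) * (Γ.gammaHat v e)⁻¹

variable (h₀ : Γ.H)

def vertCentralizer (v : Γ.V) : Subgroup (FreeGroup Γ.Gen) :=
  (Subgroup.centralizer {PresentedGroup.of (Gen.vert v)}).comap
    (PresentedGroup.mk (Γ.relsMinus h₀))

variable {Γ h₀}

lemma not_isDiag_ends (e : Γ.E) : ¬(Γ.ends e).IsDiag :=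
  (Γ.src_lt_tgt e).ne

lemma ends_injOn_tree : Set.InjOn Γ.ends Γ.tree := by
  intro e he e' he' h
  rcases Sym2.eq_iff.mp h with ⟨hs, ht⟩ | ⟨hs, ht⟩
  · exact le_antisymm (Γ.tree_min e he e' hs ht) (Γ.tree_min e' he' e hs.symm ht.symm)
  · have := calc Γ.src e < Γ.tgt e := Γ.src_lt_tgt e
      _ = Γ.src e' := ht
      _ < Γ.tgt e' := Γ.src_lt_tgt e'
      _ = Γ.src e := hs.symm
    exact (lt_irrefl _ this).elim

lemma mem_edgesAt {v : Γ.V} {e : Γ.E} : e ∈ Γ.edgesAt v ↔ Γ.src e = v ∨ Γ.tgt e = v := by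
  simp [edgesAt]

lemma ends_eq_of_mem_edgesAt {u : Γ.V} {e : Γ.E} (he : e ∈ Γ.edgesAt u) :
    Γ.ends e = s(u, Γ.otherEnd u e) := by
  unfold ends otherEnd
  split_ifs with hs
  · rw [hs]
  · rw [mem_edgesAt.mp he |>.resolve_left hs, Sym2.eq_swap]

lemma mem_edgesAt_of_ends_eq {u w : Γ.V} {e : Γ.E} (h : Γ.ends e = s(u, w)) :
    e ∈ Γ.edgesAt u ∧ Γ.otherEnd u e = w := by
  rcases Sym2.eq_iff.mp h with ⟨hs, ht⟩ | ⟨hs, ht⟩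
  · exact ⟨mem_edgesAt.mpr (Or.inl hs), by rw [otherEnd, if_pos hs, ht]⟩
  · have hne : Γ.src e ≠ u := ht ▸ (Γ.src_lt_tgt e).ne
    exact ⟨mem_edgesAt.mpr (Or.inr ht), by rw [otherEnd, if_neg hne, hs]⟩

lemma treeGraph_adj_otherEnd {u : Γ.V} {e : Γ.E} (het : e ∈ Γ.tree) (heu : e ∈ Γ.edgesAt u) :
    Γ.treeGraph.Adj u (Γ.otherEnd u e) := by
  refine ⟨⟨e, het, ends_eq_of_mem_edgesAt heu⟩, fun h => ?_⟩
  exact not_isDiag_ends e (by rw [ends_eq_of_mem_edgesAt heu, ← h]; rfl)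

lemma isTree_treeGraph : Γ.treeGraph.IsTree := by
  have : Nonempty Γ.V := Γ.nonemptyV
  have hedges : Γ.treeGraph.edgeSet = Γ.ends '' Γ.tree := by
    rw [treeGraph, SimpleGraph.edgeSet_fromEdgeSet, sdiff_eq_left, Set.disjoint_left]
    rintro _ ⟨e, -, rfl⟩ hdiag
    exact not_isDiag_ends e hdiag
  refine SimpleGraph.isTree_iff_connected_and_card.mpr ⟨⟨fun u w => ?_⟩, ?_⟩
  · refine (SimpleGraph.reachable_iff_reflTransGen u w).mpr
      (Relation.ReflTransGen.mono ?_ _ _ (Γ.tree_spanning u w))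
    rintro x y ⟨e, he, hxy⟩
    refine ⟨⟨e, he, ?_⟩, ?_⟩
    · exact Sym2.eq_iff.mpr (by tauto)
    · rintro rfl
      exact (Γ.src_lt_tgt e).ne (by rcases hxy with ⟨h₁, h₂⟩ | ⟨h₁, h₂⟩ <;> rw [h₁, h₂])
  · rw [hedges, Nat.card_coe_set_eq, ends_injOn_tree.ncard_image, Set.ncard_coe_finset,
      Nat.card_eq_fintype_card, Γ.tree_card]

lemma relsMinus_subset_rels : Γ.relsMinus h₀ ⊆ Γ.rels := by
  rintro r (((hr | ⟨h, -, rfl⟩) | hr) | hr)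
  exacts [Or.inl (Or.inl (Or.inl hr)), Or.inl (Or.inl (Or.inr ⟨h, rfl⟩)), Or.inl (Or.inr hr),
    Or.inr hr]

lemma rels_subset_insert_relsMinus :
    Γ.rels ⊆ insert (Γ.relR2 h₀) (Γ.relsMinus h₀) := by
  rintro r (((hr | ⟨h, rfl⟩) | hr) | hr)
  · exact Or.inr (Or.inl (Or.inl (Or.inl hr)))
  · obtain rfl | hh := eq_or_ne h h₀
    exacts [Or.inl rfl, Or.inr (Or.inl (Or.inl (Or.inr ⟨h, hh, rfl⟩)))]
  · exact Or.inr (Or.inl (Or.inr hr))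
  · exact Or.inr (Or.inr hr)

lemma mem_vertCentralizer_iff {v : Γ.V} {x : FreeGroup Γ.Gen} :
    x ∈ Γ.vertCentralizer h₀ v ↔
      PresentedGroup.mk (Γ.relsMinus h₀) ⁅FreeGroup.of (Gen.vert v), x⁆ = 1 := by
  simp only [vertCentralizer, Subgroup.mem_comap, Subgroup.mem_centralizer_iff_commutator_eq_one,
    Set.mem_singleton_iff, forall_eq, map_commutatorElement]
  rfl

lemma mk_commutatorElement_comm {x y : FreeGroup Γ.Gen} :
    PresentedGroup.mk (Γ.relsMinus h₀) ⁅x, y⁆ = 1 ↔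
      PresentedGroup.mk (Γ.relsMinus h₀) ⁅y, x⁆ = 1 := by
  rw [← commutatorElement_inv, map_inv, inv_eq_one]

lemma vert_mem_vertCentralizer_comm {u w : Γ.V} :
    FreeGroup.of (Gen.vert w) ∈ Γ.vertCentralizer h₀ u ↔
      FreeGroup.of (Gen.vert u) ∈ Γ.vertCentralizer h₀ w := by
  rw [mem_vertCentralizer_iff, mem_vertCentralizer_iff, mk_commutatorElement_comm]

lemma mem_vertCentralizer_of_mem_relsMinus {v : Γ.V} {x : FreeGroup Γ.Gen}
    (hx : x ∈ Γ.relsMinus h₀) : x ∈ Γ.vertCentralizer h₀ v := by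
  rw [vertCentralizer, Subgroup.mem_comap, PresentedGroup.one_of_mem hx]
  exact one_mem _

lemma mem_vertCentralizer_of_commutatorElement_mem {v : Γ.V} {x : FreeGroup Γ.Gen}
    (hx : ⁅FreeGroup.of (Gen.vert v), x⁆ ∈ Γ.relsMinus h₀) : x ∈ Γ.vertCentralizer h₀ v :=
  mem_vertCentralizer_iff.mpr (PresentedGroup.one_of_mem hx)

lemma genusProd_mem_vertCentralizer (v : Γ.V) : Γ.genusProd v ∈ Γ.vertCentralizer h₀ v := by
  refine Subgroup.list_prod_mem _ <| List.forall_mem_map.mpr fun j _ => ?_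
  have hA := mem_vertCentralizer_of_commutatorElement_mem (h₀ := h₀) (Or.inr ⟨v, j, Or.inl rfl⟩)
  have hB := mem_vertCentralizer_of_commutatorElement_mem (h₀ := h₀) (Or.inr ⟨v, j, Or.inr rfl⟩)
  rw [commutatorElement_def]
  exact mul_mem (mul_mem (mul_mem hA hB) (inv_mem hA)) (inv_mem hB)

lemma edgeProd_mul_arrowProd_mem_vertCentralizer (v : Γ.V) :
    Γ.edgeProd v * Γ.arrowProd v ∈ Γ.vertCentralizer h₀ v := by
  have hR1 : Γ.relR1 v ∈ Γ.vertCentralizer h₀ v :=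
    mem_vertCentralizer_of_mem_relsMinus (Or.inl (Or.inl (Or.inl ⟨v, rfl⟩)))
  have hγ : FreeGroup.of (Gen.vert v) ∈ Γ.vertCentralizer h₀ v :=
    mem_vertCentralizer_iff.mpr (by rw [commutatorElement_self, map_one])
  rwa [relR1, Subgroup.mul_mem_cancel_right _ (inv_mem (genusProd_mem_vertCentralizer v)),
    Subgroup.mul_mem_cancel_right _ (zpow_mem hγ _)] at hR1

lemma arrow_mem_vertCentralizer {a : Γ.H} (ha : a ≠ h₀) :
    FreeGroup.of (Gen.arrow a) ∈ Γ.vertCentralizer h₀ (Γ.vh a) :=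
  mem_vertCentralizer_iff.mpr <| mk_commutatorElement_comm.mp <|
    PresentedGroup.one_of_mem (Or.inl (Or.inl (Or.inr ⟨a, ha, rfl⟩)))

lemma arrowProd_mem_vertCentralizer {v : Γ.V} (hv : v ≠ Γ.vh h₀) :
    Γ.arrowProd v ∈ Γ.vertCentralizer h₀ v := by
  refine Subgroup.sort_prod_mem fun a ha => ?_
  obtain rfl : Γ.vh a = v := (Finset.mem_filter.mp ha).2
  exact arrow_mem_vertCentralizer (by rintro rfl; exact hv rfl)

lemma edgeFactor_of_mem_tree (v : Γ.V) {e : Γ.E} (he : e ∈ Γ.tree) :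
    Γ.edgeFactor v e = FreeGroup.of (Gen.vert (Γ.otherEnd v e)) := by
  simp [edgeFactor, gammaHat, he]

lemma edgeFactor_mem_vertCentralizer_of_not_mem_tree {v : Γ.V} {e : Γ.E} (he : e ∉ Γ.tree)
    (hev : e ∈ Γ.edgesAt v) : Γ.edgeFactor v e ∈ Γ.vertCentralizer h₀ v := by
  have hR3 := PresentedGroup.one_of_mem (rels := Γ.relsMinus h₀) (Or.inl (Or.inr ⟨e, he, rfl⟩))
  set g := FreeGroup.of (Gen.edge e he)
  by_cases hs : Γ.src e = v
  · subst hs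
    have hfac : Γ.edgeFactor (Γ.src e) e = g * FreeGroup.of (Gen.vert (Γ.tgt e)) * g⁻¹ := by
      simp [edgeFactor, gammaHat, otherEnd, he, g]
    exact mem_vertCentralizer_iff.mpr (hfac ▸ hR3)
  · obtain rfl : Γ.tgt e = v := (mem_edgesAt.mp hev).resolve_left hs
    have hfac : Γ.edgeFactor (Γ.tgt e) e = g⁻¹ * FreeGroup.of (Gen.vert (Γ.src e)) * g := by
      simp [edgeFactor, gammaHat, otherEnd, he, hs, g]
    have hconj :
        ⁅FreeGroup.of (Gen.vert (Γ.tgt e)), g⁻¹ * FreeGroup.of (Gen.vert (Γ.src e)) * g⁆ =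
          g⁻¹ * (Γ.relR3 e he)⁻¹ * g := by
      simp only [relR3, commutatorElement_def, g]
      group
    rw [mem_vertCentralizer_iff, hfac, hconj]
    simp [hR3]

lemma edgeFactor_mem_vertCentralizer {v : Γ.V} {e : Γ.E} (hev : e ∈ Γ.edgesAt v)
    (htree : e ∈ Γ.tree → FreeGroup.of (Gen.vert (Γ.otherEnd v e)) ∈ Γ.vertCentralizer h₀ v) :
    Γ.edgeFactor v e ∈ Γ.vertCentralizer h₀ v := by
  by_cases he : e ∈ Γ.tree
  · exact edgeFactor_of_mem_tree v he ▸ htree he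
  · exact edgeFactor_mem_vertCentralizer_of_not_mem_tree he hev

lemma vert_mem_vertCentralizer_of_children {u : Γ.V} (hu : u ≠ Γ.vh h₀) {e₀ : Γ.E}
    (he₀ : e₀ ∈ Γ.tree) (he₀u : e₀ ∈ Γ.edgesAt u)
    (hchildren : ∀ b ∈ Γ.edgesAt u, b ∈ Γ.tree → b ≠ e₀ →
      FreeGroup.of (Gen.vert (Γ.otherEnd u b)) ∈ Γ.vertCentralizer h₀ u) :
    FreeGroup.of (Gen.vert (Γ.otherEnd u e₀)) ∈ Γ.vertCentralizer h₀ u := by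
  have hE : Γ.edgeProd u ∈ Γ.vertCentralizer h₀ u :=
    (Subgroup.mul_mem_cancel_right _ (arrowProd_mem_vertCentralizer hu)).mp
      (edgeProd_mul_arrowProd_mem_vertCentralizer u)
  rw [← edgeFactor_of_mem_tree u he₀]
  exact Subgroup.apply_mem_of_sort_prod_mem he₀u hE fun b hb hne =>
    edgeFactor_mem_vertCentralizer hb fun hbt => hchildren b hb hbt hne

lemma arrow_mem_vertCentralizer_of_edgeProd_mem
    (h : Γ.edgeProd (Γ.vh h₀) ∈ Γ.vertCentralizer h₀ (Γ.vh h₀)) :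
    FreeGroup.of (Gen.arrow h₀) ∈ Γ.vertCentralizer h₀ (Γ.vh h₀) := by
  have hA : Γ.arrowProd (Γ.vh h₀) ∈ Γ.vertCentralizer h₀ (Γ.vh h₀) :=
    (Subgroup.mul_mem_cancel_left _ h).mp (edgeProd_mul_arrowProd_mem_vertCentralizer _)
  have hh₀ : h₀ ∈ Γ.arrowsAt (Γ.vh h₀) := Finset.mem_filter.mpr ⟨Finset.mem_univ _, rfl⟩
  refine Subgroup.apply_mem_of_sort_prod_mem (f := fun a => FreeGroup.of (Gen.arrow a)) hh₀ hA
    fun a ha hne => ?_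
  have hva : Γ.vh a = Γ.vh h₀ := (Finset.mem_filter.mp ha).2
  simpa only [hva] using arrow_mem_vertCentralizer hne

lemma vert_mem_vertCentralizer_of_adj_of_dist_lt {u w : Γ.V} (hadj : Γ.treeGraph.Adj u w)
    (hdw : Γ.treeGraph.dist (Γ.vh h₀) w < Γ.treeGraph.dist (Γ.vh h₀) u) :
    FreeGroup.of (Gen.vert w) ∈ Γ.vertCentralizer h₀ u := by
  have hT := isTree_treeGraph (Γ := Γ)
  have hd_lt : ∀ x, Γ.treeGraph.dist (Γ.vh h₀) x < Fintype.card Γ.V := fun x => by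
    obtain ⟨p, hp, hpl⟩ := hT.connected.exists_path_of_dist (Γ.vh h₀) x
    exact hpl ▸ hp.length_lt
  induction u using
    (measure fun u => Fintype.card Γ.V - Γ.treeGraph.dist (Γ.vh h₀) u).wf.induction
    generalizing w with
  | _ u ih =>
  obtain ⟨⟨e₀, he₀, hends₀⟩, -⟩ := hadj
  obtain ⟨he₀u, rfl⟩ := mem_edgesAt_of_ends_eq hends₀
  have hu : u ≠ Γ.vh h₀ := by
    rintro rfl
    simp at hdw
  refine vert_mem_vertCentralizer_of_children hu he₀ he₀u fun b hb hbt hne => ?_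
  have hx : Γ.treeGraph.Adj u (Γ.otherEnd u b) := treeGraph_adj_otherEnd hbt hb
  have hxw : Γ.otherEnd u b ≠ Γ.otherEnd u e₀ := fun h => hne <| ends_injOn_tree hbt he₀ <| by
    rw [ends_eq_of_mem_edgesAt hb, ends_eq_of_mem_edgesAt he₀u, h]
  have hdx := hT.dist_lt_of_adj_of_ne _ (treeGraph_adj_otherEnd he₀ he₀u) hdw hx hxw
  have hmeasure : Fintype.card Γ.V - Γ.treeGraph.dist (Γ.vh h₀) (Γ.otherEnd u b) <
      Fintype.card Γ.V - Γ.treeGraph.dist (Γ.vh h₀) u := by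
    have := hd_lt (Γ.otherEnd u b)
    omega
  exact vert_mem_vertCentralizer_comm.mp (ih _ hmeasure hx.symm hdx)

lemma arrow_mem_vertCentralizer_vh :
    FreeGroup.of (Gen.arrow h₀) ∈ Γ.vertCentralizer h₀ (Γ.vh h₀) := by
  refine arrow_mem_vertCentralizer_of_edgeProd_mem <| Subgroup.sort_prod_mem fun b hb =>
    edgeFactor_mem_vertCentralizer hb fun hbt => ?_
  have hx := treeGraph_adj_otherEnd hbt hb
  exact vert_mem_vertCentralizer_comm.mp <| vert_mem_vertCentralizer_of_adj_of_dist_lt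
    hx.symm (by simpa using isTree_treeGraph.connected.pos_dist_of_ne hx.ne)

end

/-- If `H ≠ ∅` and `h₀ ∈ H`, the relation (R2) for `h₀` is a consequence of the
remaining relations: the canonical surjection from the group presented by the
relators (R1), (R3), (R4) and (R2) for `h ≠ h₀` onto `G(Γ)` (identity on the
generators) is an isomorphism. -/
theorem redundant_R2 (Γ : PlumbingGraph) (h₀ : Γ.H) :
    ∃ φ : PresentedGroup (Γ.relsMinus h₀) ≃* PresentedGroup Γ.rels,
      ∀ x : Γ.Gen, φ (PresentedGroup.of x) = PresentedGroup.of x := by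
  refine PresentedGroup.exists_mulEquiv_of_subset relsMinus_subset_rels fun r hr => ?_
  obtain rfl | hr := rels_subset_insert_relsMinus (h₀ := h₀) hr
  · exact mk_commutatorElement_comm.mp (mem_vertCentralizer_iff.mp arrow_mem_vertCentralizer_vh)
  · exact PresentedGroup.one_of_mem hr

end PlumbingGraph
end

section
/- A function ξ assigning to each generator γ_v (v ∈ V), γ_h (h ∈ H), γ_e (e ∈ E*), α_{j,v}, β_{j,v} of the plumbing group G(Γ) a value in ℂ* extends to a group homomorphism G(Γ) → ℂ* if and only if for every v ∈ V one has Π_{w∈V} ξ(γ_w)^{a_{vw}} · Π_{h∈H_v} ξ(γ_h) = 1; in that case the extension is unique. -/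
open scoped BigOperators

open scoped commutatorElement

/-!
Since `ℂˣ` is abelian, every relator of type (R2)–(R4) and every product of commutators in (R1)
is sent to `1` by any assignment of values to the generators, and each conjugate
`γ_ê γ_w γ_ê⁻¹` in (R1) is sent to the value of `γ_w`. By the universal property of a presented
group the assignment therefore extends (uniquely) exactly when the image of each relator (R1) is
trivial. That image is `Π_w ξ(γ_w)^{a_{vw}} Π_{h ∈ H_v} ξ(γ_h)`, because for `w ≠ v` the edges
at `v` whose other end is `w` are exactly the `a_{vw}` edges joining `v` and `w`.
-/

theorem Finset.prod_map_sort {ι M : Type*} [CommMonoid M] (r : ι → ι → Prop) [DecidableRel r]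
    [IsTrans ι r] [Std.Antisymm r] [Std.Total r] (s : Finset ι) (f : ι → M) :
    ((s.sort r).map f).prod = ∏ i ∈ s, f i := by
  rw [Finset.prod_eq_multiset_prod, ← s.sort_eq r, Multiset.map_coe, Multiset.prod_coe]

theorem MonoidHom.map_commutatorElement_eq_one {G A : Type*} [Group G] [CommGroup A]
    (f : G →* A) (a b : G) : f ⁅a, b⁆ = 1 := by
  rw [map_commutatorElement, commutatorElement_eq_one_iff_commute]
  exact Commute.all _ _

theorem PresentedGroup.existsUnique_lift_iff {α G : Type*} [Group G] {rels : Set (FreeGroup α)}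
    (f : α → G) :
    (∃! φ : PresentedGroup rels →* G, ∀ x, φ (.of x) = f x) ↔
      ∀ r ∈ rels, FreeGroup.lift f r = 1 := by
  constructor
  · rintro ⟨φ, hφ, -⟩ r hr
    have hcomp : FreeGroup.lift f = φ.comp (PresentedGroup.mk rels) :=
      FreeGroup.ext_hom _ _ fun x => by rw [FreeGroup.lift_apply_of]; exact (hφ x).symm
    rw [hcomp, MonoidHom.comp_apply, PresentedGroup.one_of_mem hr, map_one]
  · intro h
    exact ⟨toGroup h, fun _ => toGroup.of h,
      fun ψ hψ => MonoidHom.ext fun _ => toGroup.unique h ψ hψ⟩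

namespace PlumbingGraph

variable (Γ : PlumbingGraph)

theorem otherEnd_ne (v : Γ.V) (e : Γ.E) : Γ.otherEnd v e ≠ v := by
  unfold otherEnd
  split_ifs with h
  · exact h ▸ (Γ.src_lt_tgt e).ne'
  · exact h

theorem filter_edgesAt_otherEnd_eq {v w : Γ.V} (hw : w ≠ v) :
    (Γ.edgesAt v).filter (fun e => Γ.otherEnd v e = w) =
      Finset.univ.filter fun e : Γ.E =>
        (Γ.src e = v ∧ Γ.tgt e = w) ∨ (Γ.src e = w ∧ Γ.tgt e = v) := by
  rw [edgesAt, Finset.filter_filter]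
  refine Finset.filter_congr fun e _ => ?_
  rw [otherEnd]
  by_cases hs : Γ.src e = v
  · simp only [hs, if_true, true_or, true_and]
    exact (or_iff_left fun h => hw h.1.symm).symm
  · simp only [hs, if_false, false_or, false_and]
    exact and_comm

theorem incidence_eq_card_add (v w : Γ.V) :
    Γ.incidence v w =
      (((Γ.edgesAt v).filter fun e => Γ.otherEnd v e = w).card : ℤ) +
        if w = v then Γ.euler v else 0 := by
  by_cases hw : w = v
  · subst hw
    have hempty : (Γ.edgesAt w).filter (fun e => Γ.otherEnd w e = w) = ∅ :=
      Finset.filter_false_of_mem fun e _ => Γ.otherEnd_ne w e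
    simp [incidence, hempty]
  · rw [Γ.filter_edgesAt_otherEnd_eq hw]
    simp [incidence, hw, Ne.symm hw]

variable {G : Type*} [CommGroup G]

theorem prod_zpow_incidence (x : Γ.V → G) (v : Γ.V) :
    ∏ w, x w ^ Γ.incidence v w =
      (∏ e ∈ Γ.edgesAt v, x (Γ.otherEnd v e)) * x v ^ Γ.euler v := by
  simp only [incidence_eq_card_add, zpow_add, zpow_natCast, Finset.prod_mul_distrib]
  congr 1
  · simp_rw [← Finset.prod_const,
      Finset.prod_fiberwise_of_maps_to' (fun e _ => Finset.mem_univ (Γ.otherEnd v e))]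
  · simp

theorem lift_edgeProd (ξ : Γ.Gen → G) (v : Γ.V) :
    FreeGroup.lift ξ (Γ.edgeProd v) = ∏ e ∈ Γ.edgesAt v, ξ (.vert (Γ.otherEnd v e)) := by
  rw [edgeProd, map_list_prod, List.map_map, ← Finset.prod_map_sort (· ≤ ·)]
  congr 1
  refine List.map_congr_left fun e _ => ?_
  simp only [Function.comp_apply, map_mul, map_inv, mul_inv_cancel_comm, FreeGroup.lift_apply_of]

theorem lift_arrowProd (ξ : Γ.Gen → G) (v : Γ.V) :
    FreeGroup.lift ξ (Γ.arrowProd v) = ∏ h ∈ Γ.arrowsAt v, ξ (.arrow h) := by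
  rw [arrowProd, map_list_prod, List.map_map, ← Finset.prod_map_sort (· ≤ ·)]
  simp only [Function.comp_def, FreeGroup.lift_apply_of]

theorem lift_genusProd (ξ : Γ.Gen → G) (v : Γ.V) : FreeGroup.lift ξ (Γ.genusProd v) = 1 := by
  rw [genusProd, map_list_prod, List.map_map]
  exact List.prod_eq_one fun _ hx => by
    obtain ⟨j, -, rfl⟩ := List.mem_map.mp hx
    exact MonoidHom.map_commutatorElement_eq_one _ _ _

theorem lift_relR1 (ξ : Γ.Gen → G) (v : Γ.V) :
    FreeGroup.lift ξ (Γ.relR1 v) =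
      (∏ w, ξ (.vert w) ^ Γ.incidence v w) * ∏ h ∈ Γ.arrowsAt v, ξ (.arrow h) := by
  rw [relR1, map_mul, map_inv, lift_genusProd, inv_one, mul_one, map_mul, map_mul, map_zpow,
    lift_edgeProd, lift_arrowProd, FreeGroup.lift_apply_of,
    Γ.prod_zpow_incidence (fun w => ξ (.vert w)), mul_right_comm]

theorem lift_rels_eq_one_iff (ξ : Γ.Gen → G) :
    (∀ r ∈ Γ.rels, FreeGroup.lift ξ r = 1) ↔ ∀ v, FreeGroup.lift ξ (Γ.relR1 v) = 1 := by
  refine ⟨fun h v => h _ (Or.inl (Or.inl (Or.inl ⟨v, rfl⟩))), fun h => ?_⟩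
  rintro r (((⟨v, rfl⟩ | ⟨_, rfl⟩) | ⟨_, _, rfl⟩) | ⟨_, _, rfl | rfl⟩)
  · exact h v
  all_goals exact MonoidHom.map_commutatorElement_eq_one _ _ _

/-- A function `ξ₀` on the generators of `G(Γ)` with values in `ℂ*` extends to a
group homomorphism (necessarily uniquely) `G(Γ) → ℂ*` if and only if for every
vertex `v` one has `Π_{w∈V} ξ₀(γ_w)^{a_{vw}} · Π_{h∈H_v} ξ₀(γ_h) = 1`. -/
theorem character_extension (Γ : PlumbingGraph) (ξ₀ : Γ.Gen → ℂˣ) :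
    (∃! φ : Γ.Grp →* ℂˣ, ∀ x : Γ.Gen, φ (PresentedGroup.of x) = ξ₀ x) ↔
      ∀ v : Γ.V,
        (∏ w : Γ.V, ξ₀ (Gen.vert w) ^ Γ.incidence v w) *
          ∏ h ∈ Γ.arrowsAt v, ξ₀ (Gen.arrow h) = 1 := by
  simp only [PresentedGroup.existsUnique_lift_iff, lift_rels_eq_one_iff, lift_relR1]

end PlumbingGraph
end

section
/- The group with presentation ⟨γ₁, γ₂, γ₃, γ₄, δ₂, δ₄ | γ₂ = γ₁², γ₁γ₄δ₂ = γ₂³, γ₄ = γ₃², γ₂γ₃δ₄ = γ₄, [γ₂, δ₂] = 1, [γ₄, δ₄] = 1⟩ is isomorphic to the group ⟨a, b | [a², b²] = 1⟩, via an isomorphism sending γ₁ to a and γ₃ to b. -/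
open scoped commutatorElement

/-- the six generators `γ₁, γ₂, γ₃, γ₄, δ₂, δ₄` -/
inductive GenSix : Type
  | g1 | g2 | g3 | g4 | d2 | d4

open GenSix in
/-- the relators `γ₂γ₁⁻², γ₁γ₄δ₂(γ₂³)⁻¹, γ₄γ₃⁻², γ₂γ₃δ₄γ₄⁻¹, [γ₂,δ₂], [γ₄,δ₄]` -/
def relsSix : Set (FreeGroup GenSix) :=
  { FreeGroup.of g2 * (FreeGroup.of g1 ^ 2)⁻¹,
    FreeGroup.of g1 * FreeGroup.of g4 * FreeGroup.of d2 * (FreeGroup.of g2 ^ 3)⁻¹,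
    FreeGroup.of g4 * (FreeGroup.of g3 ^ 2)⁻¹,
    FreeGroup.of g2 * FreeGroup.of g3 * FreeGroup.of d4 * (FreeGroup.of g4)⁻¹,
    ⁅FreeGroup.of g2, FreeGroup.of d2⁆,
    ⁅FreeGroup.of g4, FreeGroup.of d4⁆ }

/-- the two generators `a, b` -/
inductive GenTwo : Type
  | a | b

/-- the single relator `[a², b²]` -/
def relsTwo : Set (FreeGroup GenTwo) :=
  { ⁅FreeGroup.of GenTwo.a ^ 2, FreeGroup.of GenTwo.b ^ 2⁆ }

/-!
Tietze transformations: the relations `γ₂ = γ₁²`, `γ₄ = γ₃²`, `γ₁γ₄δ₂ = γ₂³`, `γ₂γ₃δ₄ = γ₄`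
eliminate the generators `γ₂ = γ₁²`, `γ₄ = γ₃²`, `δ₂ = γ₃⁻²γ₁⁵` and `δ₄ = γ₃⁻¹γ₁⁻²γ₃²`.
After this substitution `[γ₂, δ₂] = 1` says that `γ₁²` commutes with `γ₃⁻²`, i.e. `[γ₁², γ₃²] = 1`,
and `[γ₄, δ₄] = 1` becomes a consequence of it.
-/

theorem Commute.of_mul_right {G : Type*} [Group G] {a b c : G} (hbc : Commute a (b * c))
    (hc : Commute a c) : Commute a b := by
  simpa using hbc.mul_right hc.inv_right

namespace PresentedGroup

variable {α : Type*} {rels : Set (FreeGroup α)}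

theorem mk_of (x : α) : mk rels (FreeGroup.of x) = of x := rfl

theorem commute_of_commutatorElement_mem {x y : FreeGroup α} (h : ⁅x, y⁆ ∈ rels) :
    Commute (mk rels x) (mk rels y) := by
  rw [← commutatorElement_eq_one_iff_commute, ← map_commutatorElement]
  exact one_of_mem h

end PresentedGroup

open PresentedGroup

local notation "γ₁" => (PresentedGroup.of GenSix.g1 : PresentedGroup relsSix)
local notation "γ₂" => (PresentedGroup.of GenSix.g2 : PresentedGroup relsSix)
local notation "γ₃" => (PresentedGroup.of GenSix.g3 : PresentedGroup relsSix)
local notation "γ₄" => (PresentedGroup.of GenSix.g4 : PresentedGroup relsSix)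
local notation "δ₂" => (PresentedGroup.of GenSix.d2 : PresentedGroup relsSix)
local notation "δ₄" => (PresentedGroup.of GenSix.d4 : PresentedGroup relsSix)
local notation "𝖺" => (PresentedGroup.of GenTwo.a : PresentedGroup relsTwo)
local notation "𝖻" => (PresentedGroup.of GenTwo.b : PresentedGroup relsTwo)

namespace relsTwo

theorem commute_sq_sq : Commute (𝖺 ^ 2) (𝖻 ^ 2) := by
  simpa only [map_pow, mk_of] using commute_of_commutatorElement_mem (rels := relsTwo) rfl

end relsTwo

namespace relsSix

theorem of_g2_eq : γ₂ = γ₁ ^ 2 :=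
  (mk_eq_mk_of_mul_inv_mem (by simp [relsSix])).trans (map_pow _ _ _)

theorem of_g4_eq : γ₄ = γ₃ ^ 2 :=
  (mk_eq_mk_of_mul_inv_mem (by simp [relsSix])).trans (map_pow _ _ _)

theorem of_d2_eq : δ₂ = (γ₃ ^ 2)⁻¹ * γ₁ ^ 5 := by
  have h : γ₁ * γ₄ * δ₂ = γ₂ ^ 3 :=
    (mk_eq_mk_of_mul_inv_mem (by simp [relsSix])).trans (map_pow _ _ _)
  rw [eq_inv_mul_of_mul_eq h, of_g2_eq, of_g4_eq]
  group

theorem of_d4_eq : δ₄ = γ₃⁻¹ * (γ₁ ^ 2)⁻¹ * γ₃ ^ 2 := by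
  have h : γ₂ * γ₃ * δ₄ = γ₄ :=
    mk_eq_mk_of_mul_inv_mem (by simp [relsSix])
  rw [eq_inv_mul_of_mul_eq h, of_g2_eq, of_g4_eq]
  group

theorem commute_sq_sq : Commute (γ₁ ^ 2) (γ₃ ^ 2) := by
  have h : Commute γ₂ δ₂ := commute_of_commutatorElement_mem (by simp [relsSix])
  rw [of_g2_eq, of_d2_eq] at h
  exact Commute.inv_right_iff.mp (h.of_mul_right (Commute.pow_pow_self _ 2 5))

end relsSix

def GenSix.toTwo : GenSix → PresentedGroup relsTwo
  | .g1 => 𝖺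
  | .g2 => 𝖺 ^ 2
  | .g3 => 𝖻
  | .g4 => 𝖻 ^ 2
  | .d2 => (𝖻 ^ 2)⁻¹ * 𝖺 ^ 5
  | .d4 => 𝖻⁻¹ * (𝖺 ^ 2)⁻¹ * 𝖻 ^ 2

theorem GenSix.lift_toTwo_eq_one : ∀ r ∈ relsSix, FreeGroup.lift GenSix.toTwo r = 1 := by
  rintro r (rfl | rfl | rfl | rfl | rfl | rfl) <;>
    simp only [map_mul, map_inv, map_pow, map_commutatorElement, FreeGroup.lift_apply_of,
      GenSix.toTwo, commutatorElement_eq_one_iff_commute]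
  · group
  · group
  · group
  · group
  · exact relsTwo.commute_sq_sq.inv_right.mul_right (Commute.pow_pow_self _ 2 5)
  · exact ((Commute.pow_self _ 2).inv_right.mul_right relsTwo.commute_sq_sq.symm.inv_right).mul_right
      (Commute.refl _)

def GenTwo.toSix : GenTwo → PresentedGroup relsSix
  | .a => γ₁
  | .b => γ₃

theorem GenTwo.lift_toSix_eq_one : ∀ r ∈ relsTwo, FreeGroup.lift GenTwo.toSix r = 1 := by
  rintro r rfl
  simpa only [map_pow, map_commutatorElement, FreeGroup.lift_apply_of, GenTwo.toSix,
    commutatorElement_eq_one_iff_commute] using relsSix.commute_sq_sq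

noncomputable def relsSix.toTwo : PresentedGroup relsSix →* PresentedGroup relsTwo :=
  toGroup GenSix.lift_toTwo_eq_one

noncomputable def relsTwo.toSix : PresentedGroup relsTwo →* PresentedGroup relsSix :=
  toGroup GenTwo.lift_toSix_eq_one

theorem relsTwo.toSix_comp_toTwo : relsTwo.toSix.comp relsSix.toTwo = MonoidHom.id _ := by
  refine PresentedGroup.ext fun x => ?_
  cases x <;>
    simp only [MonoidHom.comp_apply, MonoidHom.id_apply, relsSix.toTwo, relsTwo.toSix,
      toGroup.of, GenSix.toTwo, GenTwo.toSix, map_mul, map_inv, map_pow]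
  · exact relsSix.of_g2_eq.symm
  · exact relsSix.of_g4_eq.symm
  · exact relsSix.of_d2_eq.symm
  · exact relsSix.of_d4_eq.symm

theorem relsSix.toTwo_comp_toSix : relsSix.toTwo.comp relsTwo.toSix = MonoidHom.id _ := by
  refine PresentedGroup.ext fun x => ?_
  cases x <;> rfl

/-- The group `⟨γ₁,…,γ₄,δ₂,δ₄ ∣ γ₂ = γ₁², γ₁γ₄δ₂ = γ₂³, γ₄ = γ₃², γ₂γ₃δ₄ = γ₄,
[γ₂,δ₂] = 1, [γ₄,δ₄] = 1⟩` is isomorphic to `⟨a, b ∣ [a², b²] = 1⟩`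
via `γ₁ ↦ a`, `γ₃ ↦ b`. -/
theorem presentation_acampo :
    ∃ φ : PresentedGroup relsSix ≃* PresentedGroup relsTwo,
      φ (PresentedGroup.of GenSix.g1) = PresentedGroup.of GenTwo.a ∧
      φ (PresentedGroup.of GenSix.g3) = PresentedGroup.of GenTwo.b :=
  ⟨relsSix.toTwo.toMulEquiv relsTwo.toSix relsTwo.toSix_comp_toTwo relsSix.toTwo_comp_toSix,
    toGroup.of (x := .g1) GenSix.lift_toTwo_eq_one, toGroup.of (x := .g3) GenSix.lift_toTwo_eq_one⟩
end

section
/- The group with presentation ⟨γ₁, γ₂, δ | γ₂δγ₂δ⁻¹ = γ₁⁵, γ₁δ⁻¹γ₁δ = γ₂, [γ₁, δγ₂δ⁻¹] = 1⟩ is isomorphic to the group ⟨γ, δ | [δγδ⁻¹, γ] = 1, (δ⁻¹γδ)(δγδ⁻¹) = γ³⟩, via an isomorphism sending γ₁ to γ and δ to δ. -/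
open scoped commutatorElement

/-- the three generators `γ₁, γ₂, δ` -/
inductive GenThree : Type
  | g1 | g2 | d

open GenThree in
/-- the relators `γ₂δγ₂δ⁻¹(γ₁⁵)⁻¹, γ₁δ⁻¹γ₁δγ₂⁻¹, [γ₁, δγ₂δ⁻¹]` -/
def relsThree : Set (FreeGroup GenThree) :=
  { FreeGroup.of g2 * FreeGroup.of d * FreeGroup.of g2 * (FreeGroup.of d)⁻¹ *
      (FreeGroup.of g1 ^ 5)⁻¹,
    FreeGroup.of g1 * (FreeGroup.of d)⁻¹ * FreeGroup.of g1 * FreeGroup.of d *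
      (FreeGroup.of g2)⁻¹,
    ⁅FreeGroup.of g1, FreeGroup.of d * FreeGroup.of g2 * (FreeGroup.of d)⁻¹⁆ }

/-- the two generators `γ, δ` -/
inductive GenGD : Type
  | g | d

open GenGD in
/-- the relators `[δγδ⁻¹, γ], (δ⁻¹γδ)(δγδ⁻¹)(γ³)⁻¹` -/
def relsGD : Set (FreeGroup GenGD) :=
  { ⁅FreeGroup.of d * FreeGroup.of g * (FreeGroup.of d)⁻¹, FreeGroup.of g⁆,
    ((FreeGroup.of d)⁻¹ * FreeGroup.of g * FreeGroup.of d) *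
      (FreeGroup.of d * FreeGroup.of g * (FreeGroup.of d)⁻¹) *
        (FreeGroup.of g ^ 3)⁻¹ }

/-!
A Tietze transformation. The second relation says `γ₂ = γ₁δ⁻¹γ₁δ`, so `γ₂` can be eliminated.
Substituting it, `γ₂δγ₂δ⁻¹ = γ₁ (δ⁻¹γ₁δ)(δγ₁δ⁻¹) γ₁`, so the first relation becomes
`(δ⁻¹γ₁δ)(δγ₁δ⁻¹) = γ₁³`; and `δγ₂δ⁻¹ = (δγ₁δ⁻¹) γ₁`, so the third says that `γ₁` commutes with
`δγ₁δ⁻¹`. These are exactly the relations of the two-generator presentation.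
-/

theorem PresentedGroup.lift_of_eq_one {α : Type*} {rels : Set (FreeGroup α)} :
    ∀ r ∈ rels, FreeGroup.lift (PresentedGroup.of (rels := rels)) r = 1 := by
  intro r hr
  rw [show FreeGroup.lift PresentedGroup.of = PresentedGroup.mk rels from
    FreeGroup.ext_hom _ _ fun _ => rfl]
  exact PresentedGroup.one_of_mem hr

section

variable {H : Type*} [Group H]

theorem mul_conj_mul_eq_pow_five_iff (a e : H) :
    a * e⁻¹ * a * e * e * (a * e⁻¹ * a * e) * e⁻¹ = a ^ 5 ↔
      e⁻¹ * a * e * (e * a * e⁻¹) = a ^ 3 := by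
  have hlhs : a * e⁻¹ * a * e * e * (a * e⁻¹ * a * e) * e⁻¹ =
      a * (e⁻¹ * a * e * (e * a * e⁻¹)) * a := by group
  rw [hlhs, show a ^ 5 = a * a ^ 3 * a by group, mul_left_inj, mul_right_inj]

theorem commute_conj_mul_conj_iff (a e : H) :
    Commute a (e * (a * e⁻¹ * a * e) * e⁻¹) ↔ Commute (e * a * e⁻¹) a := by
  rw [show e * (a * e⁻¹ * a * e) * e⁻¹ = e * a * e⁻¹ * a by group, Commute.symm_iff,
    IsRightRegular.commute_mul_right_iff (mul_left_injective a), Commute.symm_iff]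

theorem relsThree_iff_relsGD (a b e : H) :
    (b * e * b * e⁻¹ = a ^ 5 ∧ a * e⁻¹ * a * e = b ∧ Commute a (e * b * e⁻¹)) ↔
      (b = a * e⁻¹ * a * e ∧ Commute (e * a * e⁻¹) a ∧
        e⁻¹ * a * e * (e * a * e⁻¹) = a ^ 3) := by
  constructor
  · rintro ⟨hpow, rfl, hcomm⟩
    exact ⟨rfl, (commute_conj_mul_conj_iff a e).1 hcomm, (mul_conj_mul_eq_pow_five_iff a e).1 hpow⟩
  · rintro ⟨rfl, hcomm, hpow⟩
    exact ⟨(mul_conj_mul_eq_pow_five_iff a e).2 hpow, rfl, (commute_conj_mul_conj_iff a e).2 hcomm⟩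

theorem lift_relsThree_eq_one_iff (f : GenThree → H) :
    (∀ r ∈ relsThree, FreeGroup.lift f r = 1) ↔
      f .g2 * f .d * f .g2 * (f .d)⁻¹ = f .g1 ^ 5 ∧ f .g1 * (f .d)⁻¹ * f .g1 * f .d = f .g2 ∧
        Commute (f .g1) (f .d * f .g2 * (f .d)⁻¹) := by
  simp only [relsThree, Set.mem_insert_iff, Set.mem_singleton_iff, forall_eq_or_imp, forall_eq,
    map_mul, map_inv, map_pow, map_commutatorElement, FreeGroup.lift_apply_of, mul_inv_eq_one,
    commutatorElement_eq_one_iff_mul_comm]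
  rfl

theorem lift_relsGD_eq_one_iff (f : GenGD → H) :
    (∀ r ∈ relsGD, FreeGroup.lift f r = 1) ↔
      Commute (f .d * f .g * (f .d)⁻¹) (f .g) ∧
        (f .d)⁻¹ * f .g * f .d * (f .d * f .g * (f .d)⁻¹) = f .g ^ 3 := by
  simp only [relsGD, Set.mem_insert_iff, Set.mem_singleton_iff, forall_eq_or_imp, forall_eq,
    map_mul, map_inv, map_pow, map_commutatorElement, FreeGroup.lift_apply_of, mul_inv_eq_one,
    commutatorElement_eq_one_iff_mul_comm]
  rfl

end

namespace ClosedGraphManifold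

open PresentedGroup

def gdOfThree : GenThree → PresentedGroup relsGD
  | .g1 => of .g
  | .g2 => of .g * (of .d)⁻¹ * of .g * of .d
  | .d => of .d

def threeOfGD : GenGD → PresentedGroup relsThree
  | .g => of .g1
  | .d => of .d

theorem of_g2_eq : (of .g2 : PresentedGroup relsThree) = of .g1 * (of .d)⁻¹ * of .g1 * of .d :=
  ((relsThree_iff_relsGD _ _ _).1 ((lift_relsThree_eq_one_iff of).1 lift_of_eq_one)).1

theorem lift_threeOfGD_eq_one : ∀ r ∈ relsGD, FreeGroup.lift threeOfGD r = 1 :=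
  (lift_relsGD_eq_one_iff threeOfGD).2
    ((relsThree_iff_relsGD _ _ _).1 ((lift_relsThree_eq_one_iff of).1 lift_of_eq_one)).2

theorem lift_gdOfThree_eq_one : ∀ r ∈ relsThree, FreeGroup.lift gdOfThree r = 1 :=
  (lift_relsThree_eq_one_iff gdOfThree).2 <| (relsThree_iff_relsGD _ _ _).2
    ⟨rfl, (lift_relsGD_eq_one_iff of).1 lift_of_eq_one⟩

def toGD : PresentedGroup relsThree →* PresentedGroup relsGD := toGroup lift_gdOfThree_eq_one

def toThree : PresentedGroup relsGD →* PresentedGroup relsThree := toGroup lift_threeOfGD_eq_one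

theorem toThree_comp_toGD : toThree.comp toGD = MonoidHom.id _ :=
  PresentedGroup.ext fun x => by
    cases x <;> simp [toGD, toThree, toGroup.of, gdOfThree, threeOfGD, of_g2_eq]

theorem toGD_comp_toThree : toGD.comp toThree = MonoidHom.id _ :=
  PresentedGroup.ext fun x => by
    cases x <;> simp [toGD, toThree, toGroup.of, gdOfThree, threeOfGD]

end ClosedGraphManifold

/-- The group `⟨γ₁, γ₂, δ ∣ γ₂δγ₂δ⁻¹ = γ₁⁵, γ₁δ⁻¹γ₁δ = γ₂, [γ₁, δγ₂δ⁻¹] = 1⟩`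
is isomorphic to `⟨γ, δ ∣ [δγδ⁻¹, γ] = 1, (δ⁻¹γδ)(δγδ⁻¹) = γ³⟩`
via `γ₁ ↦ γ`, `δ ↦ δ`. -/
theorem presentation_closed_graph_manifold :
    ∃ φ : PresentedGroup relsThree ≃* PresentedGroup relsGD,
      φ (PresentedGroup.of GenThree.g1) = PresentedGroup.of GenGD.g ∧
      φ (PresentedGroup.of GenThree.d) = PresentedGroup.of GenGD.d := by
  open ClosedGraphManifold in
  exact ⟨toGD.toMulEquiv toThree toThree_comp_toGD toGD_comp_toThree, rfl, rfl⟩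
end

section
/- Let G = ⟨a, b | [a², b²] = 1⟩ and let ξ : G → ℂ* be the character determined by ξ(a) = −1 and ξ(b) = −1. Then dim_ℂ H¹(G; ℂ_ξ) = 1. In particular ξ does not belong to the second characteristic variety Char₂(G) = {characters ξ : dim_ℂ H¹(G; ℂ_ξ) ≥ 2}. -/
open scoped commutatorElement

/-!
A 1-cocycle of `ℂ_ξ` is the translation part of a homomorphism `G → Aff(ℂ)` whose linear
part is `ξ`. Since `ξ(a)² = ξ(b)² = 1`, sending `a` and `b` to homotheties of ratios `ξ(a)`,
`ξ(b)` about arbitrary centres kills `[a², b²]`, so a cocycle may take any pair of values on `a`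
and `b`. The coboundaries `g ↦ (ξ(g) - 1) x` take the value `-2x` on both generators, so
`f ↦ f(a) - f(b)` identifies `H¹(G; ℂ_ξ)` with `ℂ`.
-/

open groupCohomology

section General

variable {k G : Type} [CommRing k] [Group G] {A : Rep k G}

lemma cocycles₁_map_mul (f : cocycles₁ A) (g h : G) : f (g * h) = A.ρ g (f h) + f g :=
  (mem_cocycles₁_iff (f : G → A)).1 f.2 g h

lemma cocycles₁_ext_of_closure_eq_top {S : Set G} (hS : Subgroup.closure S = ⊤)
    {f₁ f₂ : cocycles₁ A} (h : Set.EqOn f₁ f₂ S) : f₁ = f₂ := by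
  ext g
  have hg : g ∈ Subgroup.closure S := hS ▸ Subgroup.mem_top g
  induction hg using Subgroup.closure_induction with
  | mem g hg => exact h hg
  | one => simp
  | mul g₁ g₂ _ _ h₁ h₂ => rw [cocycles₁_map_mul, cocycles₁_map_mul, h₁, h₂]
  | inv g _ hg =>
    rw [← (A.ρ.apply_bijective g).injective.eq_iff, cocycles₁_map_inv, cocycles₁_map_inv, hg]

lemma cocycles₁_ext_presentedGroup {α : Type} {rels : Set (FreeGroup α)}
    {A : Rep k (PresentedGroup rels)} {f₁ f₂ : cocycles₁ A}
    (h : ∀ i, f₁ (PresentedGroup.of i) = f₂ (PresentedGroup.of i)) : f₁ = f₂ :=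
  cocycles₁_ext_of_closure_eq_top (PresentedGroup.closure_range_of rels)
    (Set.forall_mem_range.2 h)

lemma finrank_H1_eq_of_surjective {M : Type} [AddCommGroup M] [Module k M]
    (φ : cocycles₁ A →ₗ[k] M) (hφ : Function.Surjective φ)
    (hker : ∀ f, φ f = 0 ↔ ⇑f ∈ coboundaries₁ A) :
    Module.finrank k (H1 A) = Module.finrank k M := by
  have hker' : LinearMap.ker φ = LinearMap.ker (H1π A).hom := by
    ext f
    rw [LinearMap.mem_ker, LinearMap.mem_ker, hker, ← H1π_eq_zero_iff]
  have e : H1 A ≃ₗ[k] M :=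
    ((H1π A).hom.quotKerEquivOfSurjective ((ModuleCat.epi_iff_surjective _).1 inferInstance)).symm
      ≪≫ₗ Submodule.quotEquivOfEq _ _ hker'.symm ≪≫ₗ φ.quotKerEquivOfSurjective hφ
  exact e.finrank_eq

end General

lemma AffineEquiv.linearHom_comp_homothetyUnitsMulHom {R V P : Type*} [CommRing R]
    [AddCommGroup V] [Module R V] [AddTorsor V P] (p : P) :
    linearHom.comp (homothetyUnitsMulHom p) = DistribMulAction.toModuleAut R V := by
  ext t v
  change (AffineMap.homothety p (t : R)).linear v = t • v
  simp [AffineMap.homothety_linear, Units.smul_def]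

section Character

variable {G : Type} [Group G] (ξ : G →* ℂˣ)

lemma mem_cocycles₁_charRep_iff (f : G → ℂ) :
    f ∈ cocycles₁ (charRep ξ) ↔ ∀ g h, f (g * h) = ξ g * f h + f g :=
  mem_cocycles₁_iff (A := charRep ξ) f

lemma mem_coboundaries₁_charRep_iff (f : G → ℂ) :
    f ∈ coboundaries₁ (charRep ξ) ↔ ∃ x : ℂ, ∀ g, (ξ g - 1 : ℂ) * x = f g := by
  change (∃ x : ℂ, (fun g => (ξ g : ℂ) * x - x) = f) ↔ _
  simp only [funext_iff, sub_one_mul]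

lemma mem_cocycles₁_charRep_of_linearHom_comp {F : G →* ℂ ≃ᵃ[ℂ] ℂ}
    (hF : AffineEquiv.linearHom.comp F = (DistribMulAction.toModuleAut ℂ ℂ).comp ξ) :
    (fun g => F g 0) ∈ cocycles₁ (charRep ξ) := by
  rw [mem_cocycles₁_charRep_iff]
  intro g h
  have hlin : (F g).linear (F h 0) = ξ g * F h 0 := by
    simpa [Units.smul_def] using LinearEquiv.congr_fun (DFunLike.congr_fun hF g) (F h 0)
  have hdecomp := (F g).map_vadd 0 (F h 0)
  rw [vadd_eq_add, vadd_eq_add, add_zero, hlin] at hdecomp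
  rw [map_mul, AffineEquiv.coe_mul, Function.comp_apply, hdecomp]

end Character

section TwoGenerators

open PresentedGroup

lemma lift_relsTwo_eq_one {H : Type} [Group H] {f : GenTwo → H} (ha : f .a ^ 2 = 1)
    (hb : f .b ^ 2 = 1) : ∀ r ∈ relsTwo, FreeGroup.lift f r = 1 := by
  rintro _ rfl
  simp [ha, hb]

variable (ξ : PresentedGroup relsTwo →* ℂˣ)

lemma exists_mem_cocycles₁_apply_of (ha : ξ (of .a) ^ 2 = 1) (hb : ξ (of .b) ^ 2 = 1)
    (p q : ℂ) :
    ∃ f : PresentedGroup relsTwo → ℂ, f ∈ cocycles₁ (charRep ξ) ∧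
      f (of .a) = (1 - ξ (of .a) : ℂ) * p ∧ f (of .b) = (1 - ξ (of .b) : ℂ) * q := by
  let F : PresentedGroup relsTwo →* ℂ ≃ᵃ[ℂ] ℂ :=
    toGroup (f := fun i => AffineEquiv.homothetyUnitsMulHom (GenTwo.rec p q i) (ξ (of i)))
      (lift_relsTwo_eq_one (by simp [← map_pow, ha]) (by simp [← map_pow, hb]))
  have hF : AffineEquiv.linearHom.comp F = (DistribMulAction.toModuleAut ℂ ℂ).comp ξ := by
    ext1 i
    simp only [MonoidHom.comp_apply, F, toGroup.of]
    rw [← MonoidHom.comp_apply, AffineEquiv.linearHom_comp_homothetyUnitsMulHom]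
  refine ⟨fun g => F g 0, mem_cocycles₁_charRep_of_linearHom_comp ξ hF, ?_, ?_⟩ <;>
  · simp [F, AffineMap.homothety_apply]
    ring

lemma mem_coboundaries₁_iff_apply_of_a_eq_apply_of_b (ha : (ξ (of .a) : ℂ) = -1)
    (hb : (ξ (of .b) : ℂ) = -1) {f : PresentedGroup relsTwo → ℂ}
    (hf : f ∈ cocycles₁ (charRep ξ)) :
    f ∈ coboundaries₁ (charRep ξ) ↔ f (of .a) = f (of .b) := by
  rw [mem_coboundaries₁_charRep_iff]
  constructor
  · rintro ⟨x, hx⟩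
    rw [← hx, ← hx, ha, hb]
  · intro hab
    let x : ℂ := -f (of .a) / 2
    have hd : (fun g => (ξ g - 1 : ℂ) * x) ∈ cocycles₁ (charRep ξ) :=
      (mem_cocycles₁_charRep_iff ξ _).2 fun g h => by simp only [map_mul, Units.val_mul]; ring
    have hdf := cocycles₁_ext_presentedGroup (f₁ := ⟨_, hd⟩) (f₂ := ⟨f, hf⟩) <| by
      rintro (_ | _)
      · change (ξ (of .a) - 1 : ℂ) * x = f (of .a)
        rw [ha]; ring
      · change (ξ (of .b) - 1 : ℂ) * x = f (of .b)
        rw [hb, ← hab]; ring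
    exact ⟨x, congrFun (congrArg Subtype.val hdf)⟩

end TwoGenerators

/-- For `G = ⟨a, b ∣ [a², b²] = 1⟩` and the character `ξ` with `ξ(a) = ξ(b) = −1`,
one has `dim_ℂ H¹(G; ℂ_ξ) = 1`; in particular `ξ ∉ Char₂(G)`. -/
theorem char_not_in_second_char_var
    (ξ : PresentedGroup relsTwo →* ℂˣ)
    (ha : (ξ (PresentedGroup.of GenTwo.a) : ℂ) = -1)
    (hb : (ξ (PresentedGroup.of GenTwo.b) : ℂ) = -1) :
    h1dim ξ = 1 ∧ ¬ 2 ≤ h1dim ξ := by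
  have ha₂ : ξ (PresentedGroup.of .a) ^ 2 = 1 := Units.ext (by push_cast [ha]; norm_num)
  have hb₂ : ξ (PresentedGroup.of .b) ^ 2 = 1 := Units.ext (by push_cast [hb]; norm_num)
  let φ : cocycles₁ (charRep ξ) →ₗ[ℂ] ℂ :=
    (LinearMap.proj (PresentedGroup.of .a) - LinearMap.proj (PresentedGroup.of .b)) ∘ₗ
      (cocycles₁ (charRep ξ)).subtype
  have hφ : Function.Surjective φ := fun z => by
    obtain ⟨f, hf, hfa, hfb⟩ := exists_mem_cocycles₁_apply_of ξ ha₂ hb₂ (z / 2) 0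
    refine ⟨⟨f, hf⟩, ?_⟩
    change f (PresentedGroup.of .a) - f (PresentedGroup.of .b) = z
    rw [hfa, hfb, ha]
    ring
  have hker (f : cocycles₁ (charRep ξ)) : φ f = 0 ↔ ⇑f ∈ coboundaries₁ (charRep ξ) :=
    sub_eq_zero.trans (mem_coboundaries₁_iff_apply_of_a_eq_apply_of_b ξ ha hb f.2).symm
  have hdim : h1dim ξ = 1 := by
    rw [h1dim, finrank_H1_eq_of_surjective φ hφ hker, Module.finrank_self]
  exact ⟨hdim, by omega⟩
end
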